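/- Let μ₁ = N(m₁, P₁) and μ₂ = N(m₂, P₂) be two Gaussian measures on ℝ^d where P₁ is positive definite and P₂ is positive semidefinite. Then the squared 2-Wasserstein distance satisfies W₂²(μ₁, μ₂) ≤ ‖m₁ - m₂‖² + ‖P₁ - P₂‖_F² / λ_min(P₁). -/

import Mathlib

open Matrix

open scoped ComplexOrder in
/-- The positive semidefinite square root of a positive semidefinite matrix
(the Mathlib definition of December 2024, since removed from Mathlib). -/
noncomputable def Matrix.PosSemidef.sqrt {n : Type*} [Fintype n] [DecidableEq n]
    {𝕜 : Type*} [RCLike 𝕜] {A : Matrix n n 𝕜} (hA : A.PosSemidef) : Matrix n n 𝕜 :=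
  hA.1.eigenvectorUnitary.1 * diagonal ((↑) ∘ (√·) ∘ hA.1.eigenvalues) *
  (star hA.1.eigenvectorUnitary : Matrix n n 𝕜)

/-!
Write `R = P₁^{1/2}`, `S = (R P₂ R)^{1/2}` and `T = R⁻¹ S`, so that `R T = S = Tᵀ R` and
`T Tᵀ = P₂`. With `G = R - T` and `K = R + T` the trace term equals `tr (Gᵀ G)`, while
`2 (P₁ - P₂) = N + Nᵀ` for `N = G Kᵀ`, whence `4 ‖P₁ - P₂‖_F² = 2 tr (N N) + 2 tr (Nᵀ N)`.
Since `Kᵀ K = P₁ + Tᵀ T + 2 S ⪰ λ_min(P₁)`, and hence also `K Kᵀ ⪰ λ_min(P₁)`, each of the two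
traces is at least `λ_min(P₁) tr (Gᵀ G)`; here `Kᵀ G = P₁ - Tᵀ T` being symmetric is what turns
`tr (N N)` into `tr (G Gᵀ K Kᵀ)`.
-/

open scoped ComplexOrder MatrixOrder

namespace Matrix

section RCLike

variable {n 𝕜 : Type*} [Fintype n] [DecidableEq n] [RCLike 𝕜]

theorem PosSemidef.sqrt_eq_cfcSqrt {A : Matrix n n 𝕜} (hA : A.PosSemidef) :
    hA.sqrt = CFC.sqrt A := by
  rw [CFC.sqrt_eq_cfc, cfc_nnreal_eq_real _ A hA.nonneg, hA.1.cfc_eq]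
  simp [IsHermitian.cfc, PosSemidef.sqrt, Function.comp_def, hA.eigenvalues_nonneg]

theorem PosSemidef.posSemidef_sqrt {A : Matrix n n 𝕜} (hA : A.PosSemidef) :
    hA.sqrt.PosSemidef :=
  hA.sqrt_eq_cfcSqrt ▸ (CFC.sqrt_nonneg A).posSemidef

theorem PosSemidef.sqrt_mul_self {A : Matrix n n 𝕜} (hA : A.PosSemidef) :
    hA.sqrt * hA.sqrt = A := by
  rw [hA.sqrt_eq_cfcSqrt, CFC.sqrt_mul_sqrt_self A hA.nonneg]

theorem IsHermitian.posSemidef_sub_iInf_eigenvalues_smul_one {A : Matrix n n 𝕜}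
    (hA : A.IsHermitian) : (A - (⨅ i, hA.eigenvalues i) • (1 : Matrix n n 𝕜)).PosSemidef := by
  rw [← le_iff, ← Algebra.algebraMap_eq_smul_one,
    algebraMap_le_iff_le_spectrum (R := ℝ) (ha := hA.isSelfAdjoint),
    hA.spectrum_real_eq_range_eigenvalues]
  rintro _ ⟨i, rfl⟩
  exact ciInf_le (Finite.bddBelow_range _) i

theorem PosSemidef.trace_mul_nonneg {A B : Matrix n n 𝕜} (hA : A.PosSemidef)
    (hB : B.PosSemidef) : 0 ≤ (A * B).trace := by
  obtain ⟨X, rfl⟩ := CStarAlgebra.nonneg_iff_eq_star_mul_self.mp hA.nonneg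
  rw [mul_assoc, trace_mul_comm, star_eq_conjTranspose]
  exact (hB.mul_mul_conjTranspose_same X).trace_nonneg

end RCLike

theorem trace_mul_self_add_transpose {n R : Type*} [Fintype n] [CommRing R] (N : Matrix n n R) :
    ((N + Nᵀ) * (N + Nᵀ)).trace = 2 * (N * N).trace + 2 * (Nᵀ * N).trace := by
  have hsq : (Nᵀ * Nᵀ).trace = (N * N).trace := by
    rw [← transpose_mul, trace_transpose]
  have hcomm : (N * Nᵀ).trace = (Nᵀ * N).trace := trace_mul_comm N Nᵀ
  simp only [add_mul, mul_add, trace_add, hsq, hcomm]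
  ring

section Real

variable {n : Type*} [Fintype n] [DecidableEq n]

theorem PosSemidef.mul_trace_le_trace_mul {A B : Matrix n n ℝ} {l : ℝ} (hA : A.PosSemidef)
    (hB : (B - l • 1).PosSemidef) : l * A.trace ≤ (A * B).trace := by
  have h := hA.trace_mul_nonneg hB
  rw [mul_sub, trace_sub, Matrix.mul_smul, mul_one, trace_smul, smul_eq_mul] at h
  linarith

theorem PosSemidef.self_mul_transpose_sub_smul_one {K : Matrix n n ℝ} {l : ℝ}
    (h : (Kᵀ * K - l • 1).PosSemidef) : (K * Kᵀ - l • 1).PosSemidef := by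
  rcases le_or_gt l 0 with hl | hl
  · rw [sub_eq_add_neg, ← neg_smul]
    simpa using (posSemidef_self_mul_conjTranspose K).add (PosSemidef.one.smul (neg_nonneg.mpr hl))
  · have hK : IsUnit K := by
      refine isUnit_of_mul_isUnit_right (x := Kᵀ) (PosDef.isUnit ?_)
      simpa using (PosDef.one.smul hl).add_posSemidef h
    -- `Kᵀ (K Kᵀ - l) K = Q (Q + l)` with `Q = Kᵀ K - l`
    have hconj : star K * (K * Kᵀ - l • 1) * K =
        (Kᵀ * K - l • 1)ᴴ * (Kᵀ * K - l • 1) + l • (Kᵀ * K - l • 1) := by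
      rw [h.1.eq]
      simp only [star_eq_conjTranspose, conjTranspose_eq_transpose_of_trivial]
      simp only [mul_sub, sub_mul, Matrix.mul_smul, Matrix.smul_mul, mul_one, one_mul, smul_sub,
        smul_smul, mul_assoc]
      abel
    rw [← hK.posSemidef_star_left_conjugate_iff, hconj]
    exact (posSemidef_conjTranspose_mul_self _).add (h.smul hl.le)

variable {G K : Matrix n n ℝ} {l : ℝ}

theorem mul_trace_le_trace_transpose_mul_self_mul_transpose (hK : (Kᵀ * K - l • 1).PosSemidef) :
    l * (Gᵀ * G).trace ≤ ((G * Kᵀ)ᵀ * (G * Kᵀ)).trace := by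
  have hG : (Gᵀ * G).PosSemidef := by
    simpa using posSemidef_conjTranspose_mul_self G
  calc l * (Gᵀ * G).trace ≤ (Gᵀ * G * (Kᵀ * K)).trace := hG.mul_trace_le_trace_mul hK
    _ = ((G * Kᵀ)ᵀ * (G * Kᵀ)).trace := by
      rw [transpose_mul, transpose_transpose, trace_mul_comm (Gᵀ * G)]
      simp only [← mul_assoc]
      rw [trace_mul_comm (K * Gᵀ * G) Kᵀ]
      simp only [← mul_assoc]

theorem mul_trace_le_trace_mul_self_mul_transpose (hGK : (Kᵀ * G)ᵀ = Kᵀ * G)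
    (hK : (Kᵀ * K - l • 1).PosSemidef) :
    l * (Gᵀ * G).trace ≤ ((G * Kᵀ) * (G * Kᵀ)).trace := by
  have hG : (G * Gᵀ).PosSemidef := by
    simpa using posSemidef_self_mul_conjTranspose G
  calc l * (Gᵀ * G).trace = l * (G * Gᵀ).trace := by rw [trace_mul_comm]
    _ ≤ (G * Gᵀ * (K * Kᵀ)).trace :=
      hG.mul_trace_le_trace_mul hK.self_mul_transpose_sub_smul_one
    _ = ((Kᵀ * G)ᵀ * (Kᵀ * G)).trace := by
      rw [transpose_mul, transpose_transpose]
      simp only [← mul_assoc]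
      rw [trace_mul_comm (Gᵀ * K * Kᵀ) G]
      simp only [mul_assoc]
    _ = ((G * Kᵀ) * (G * Kᵀ)).trace := by
      rw [hGK]
      simp only [← mul_assoc]
      rw [trace_mul_comm (Kᵀ * G * Kᵀ) G]
      simp only [mul_assoc]

theorem mul_trace_transpose_mul_sub_le {R T : Matrix n n ℝ} (hR : Rᵀ = R)
    (hRT : (R * T).PosSemidef) (hl : (R * R - l • 1).PosSemidef) :
    l * ((R - T)ᵀ * (R - T)).trace ≤ ((R * R - T * Tᵀ) * (R * R - T * Tᵀ)).trace := by
  have hTR : Tᵀ * R = R * T := by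
    simpa [hR] using hRT.1.eq
  have hGK : (R + T)ᵀ * (R - T) = R * R - Tᵀ * T := by
    rw [transpose_add, hR, add_mul, mul_sub, mul_sub, hTR]
    abel
  have hK : ((R + T)ᵀ * (R + T) - l • 1).PosSemidef := by
    have hTT : (Tᵀ * T).PosSemidef := by simpa using posSemidef_conjTranspose_mul_self T
    convert (hl.add hTT).add (hRT.add hRT) using 1
    rw [transpose_add, hR, add_mul, mul_add, mul_add, hTR]
    abel
  have hsum : (R - T) * (R + T)ᵀ + ((R - T) * (R + T)ᵀ)ᵀ = (2 : ℝ) • (R * R - T * Tᵀ) := by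
    rw [transpose_mul, transpose_transpose, transpose_add, transpose_sub, hR, two_smul]
    noncomm_ring
  have h₁ := mul_trace_le_trace_transpose_mul_self_mul_transpose (G := R - T) hK
  have hGK_symm : ((R + T)ᵀ * (R - T))ᵀ = (R + T)ᵀ * (R - T) := by
    rw [hGK, transpose_sub, transpose_mul, transpose_mul, hR, transpose_transpose]
  have h₂ := mul_trace_le_trace_mul_self_mul_transpose hGK_symm hK
  have h := trace_mul_self_add_transpose ((R - T) * (R + T)ᵀ)
  rw [hsum, smul_mul_smul_comm, trace_smul, smul_eq_mul] at h
  linarith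

theorem mul_trace_add_sub_two_smul_le {R S P : Matrix n n ℝ} (hR : Rᵀ = R) (hRu : IsUnit R)
    (hS : S.PosSemidef) (hSS : S * S = R * P * R) (hl : (R * R - l • 1).PosSemidef) :
    l * (R * R + P - (2 : ℝ) • S).trace ≤ ((R * R - P) * (R * R - P)).trace := by
  have hdet := (isUnit_iff_isUnit_det R).mp hRu
  have hRT : R * (R⁻¹ * S) = S := by rw [← mul_assoc, mul_nonsing_inv _ hdet, one_mul]
  have hTt : (R⁻¹ * S)ᵀ = S * R⁻¹ := by
    rw [transpose_mul, transpose_nonsing_inv, hR, (isHermitian_iff_isSymm.mp hS.1).eq]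
  have hTR : (R⁻¹ * S)ᵀ * R = S := by
    rw [hTt, mul_assoc, nonsing_inv_mul _ hdet, mul_one]
  have hTT : (R⁻¹ * S) * (R⁻¹ * S)ᵀ = P := by
    rw [hTt, show R⁻¹ * S * (S * R⁻¹) = R⁻¹ * (S * S) * R⁻¹ by simp only [mul_assoc], hSS]
    simp only [← mul_assoc, nonsing_inv_mul _ hdet, one_mul]
    rw [mul_assoc, mul_nonsing_inv _ hdet, mul_one]
  have htrace : ((R - R⁻¹ * S)ᵀ * (R - R⁻¹ * S)).trace = (R * R + P - (2 : ℝ) • S).trace := by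
    rw [transpose_sub, hR, sub_mul, mul_sub, mul_sub, hRT, hTR]
    simp only [trace_sub, trace_add, two_smul]
    rw [trace_mul_comm _ (R⁻¹ * S), hTT]
    ring
  have h := mul_trace_transpose_mul_sub_le hR (hRT ▸ hS) hl
  rwa [htrace, hTT] at h

end Real
end Matrix

/-- Squared 2-Wasserstein distance between Gaussians `N(m₁,P₁)` and `N(m₂,P₂)`
(given by the explicit Gaussian formula
`W₂² = ‖m₁-m₂‖² + tr(P₁ + P₂ - 2 (P₁^{1/2} P₂ P₁^{1/2})^{1/2})`) is bounded by
`‖m₁ - m₂‖² + ‖P₁ - P₂‖_F² / λ_min(P₁)` when `P₁` is positive definite. -/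
theorem gaussian_wasserstein_bound {d : ℕ}
    (m₁ m₂ : Fin d → ℝ) (P₁ P₂ : Matrix (Fin d) (Fin d) ℝ)
    (hP₁ : P₁.PosDef) (hP₂ : P₂.PosSemidef)
    (hQ : (hP₁.posSemidef.sqrt * P₂ * hP₁.posSemidef.sqrt).PosSemidef) :
    (∑ i, (m₁ i - m₂ i) ^ 2) +
        Matrix.trace (P₁ + P₂ - (2 : ℝ) • hQ.sqrt) ≤
      (∑ i, (m₁ i - m₂ i) ^ 2) +
        Matrix.trace ((P₁ - P₂)ᵀ * (P₁ - P₂)) / (⨅ i, hP₁.1.eigenvalues i) := by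
  rcases isEmpty_or_nonempty (Fin d) with hd | hd
  · simp [Matrix.trace]
  refine add_le_add_right ?_ (∑ i, (m₁ i - m₂ i) ^ 2)
  have hRR : hP₁.posSemidef.sqrt * hP₁.posSemidef.sqrt = P₁ := hP₁.posSemidef.sqrt_mul_self
  have hl : 0 < ⨅ i, hP₁.1.eigenvalues i := by
    obtain ⟨i, hi⟩ := exists_eq_ciInf_of_finite (f := hP₁.1.eigenvalues)
    exact hi ▸ hP₁.eigenvalues_pos i
  have key := mul_trace_add_sub_two_smul_le
    (isHermitian_iff_isSymm.mp hP₁.posSemidef.posSemidef_sqrt.1).eq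
    (isUnit_of_mul_isUnit_right (hRR ▸ hP₁.isUnit)) hQ.posSemidef_sqrt hQ.sqrt_mul_self
    (by rw [hRR]; exact hP₁.1.posSemidef_sub_iInf_eigenvalues_smul_one)
  rw [hRR] at key
  rw [(isHermitian_iff_isSymm.mp (hP₁.1.sub hP₂.1)).eq, le_div_iff₀ hl, mul_comm]
  exact key
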